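/- Let d, d̄ ∈ ℝ³ be linearly independent and let F : ℝ³ → ℝ be continuously differentiable. If ∇F(x)·((x·d)d̄ − (x·d̄)d) = 0 for every x ∈ S, then F is constant on each circle of latitude relative to the axis d × d̄; that is, F(x) = F(z) whenever x, z ∈ S satisfy x·(d × d̄) = z·(d × d̄). -/

import Mathlib

open scoped RealInnerProductSpace

noncomputable section

abbrev E3 := EuclideanSpace ℝ (Fin 3)

/-- The unit sphere `S = {x ∈ ℝ³ : |x| = 1}`. -/
def sphS : Set E3 := Metric.sphere 0 1

def cross3 (a b : E3) : E3 :=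
  (EuclideanSpace.equiv (Fin 3) ℝ).symm
    ![a 1 * b 2 - a 2 * b 1, a 2 * b 0 - a 0 * b 2, a 0 * b 1 - a 1 * b 0]

/-!
With `n = d × d̄`, the triple product expansion gives `(x·d)d̄ − (x·d̄)d = n × x`, and `n ≠ 0`
because `d, d̄` are independent, so the field generates the rotations `R_θ` about the axis `n`.
The curve `θ ↦ R_θ x` stays on the sphere (its velocity `n × R_θ x` is orthogonal to its
position), so by hypothesis `F` has zero derivative along it. Two points of the sphere at the same
height along `n` differ by such a rotation: their components `p`, `w` orthogonal to `n` have equal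
length, `w` lies in the plane spanned by `p` and `n × p`, and `R_θ` acts on that plane as the
planar rotation by `θ`.
-/

open Matrix WithLp Real

theorem mem_sphS_iff {x : E3} : x ∈ sphS ↔ ‖x‖ = 1 := mem_sphere_zero_iff_norm

theorem exists_cos_eq_sin_eq {a b : ℝ} (h : a ^ 2 + b ^ 2 = 1) :
    ∃ θ : ℝ, cos θ = a ∧ sin θ = b := by
  have hz : ‖(⟨a, b⟩ : ℂ)‖ = 1 := by
    rw [← pow_eq_one_iff_of_nonneg (norm_nonneg _) two_ne_zero, Complex.sq_norm,
      Complex.normSq_mk, ← h]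
    ring
  refine ⟨Complex.arg ⟨a, b⟩, ?_, ?_⟩
  · simpa [hz] using Complex.norm_mul_cos_arg ⟨a, b⟩
  · simpa [hz] using Complex.norm_mul_sin_arg ⟨a, b⟩

theorem norm_sub_inner_smul_sq {E : Type*} [NormedAddCommGroup E] [InnerProductSpace ℝ E]
    {u : E} (hu : ‖u‖ = 1) (y : E) : ‖y - ⟪y, u⟫ • u‖ ^ 2 = ‖y‖ ^ 2 - ⟪y, u⟫ ^ 2 := by
  rw [norm_sub_sq_real, inner_smul_right, norm_smul, hu, Real.norm_eq_abs, mul_one, sq_abs]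
  ring

theorem apply_eq_apply_of_fderiv_apply_eq_zero {E G : Type*} [NormedAddCommGroup E]
    [NormedSpace ℝ E] [NormedAddCommGroup G] [NormedSpace ℝ G] {f : E → G}
    (hf : Differentiable ℝ f) {c c' : ℝ → E} (hc : ∀ θ, HasDerivAt c (c' θ) θ)
    (h : ∀ θ, fderiv ℝ f (c θ) (c' θ) = 0) (a b : ℝ) : f (c a) = f (c b) := by
  have hfc : ∀ θ, HasDerivAt (f ∘ c) 0 θ := fun θ => by
    simpa [h θ] using (hf (c θ)).hasFDerivAt.comp_hasDerivAt θ (hc θ)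
  exact is_const_of_deriv_eq_zero (fun θ => (hfc θ).differentiableAt) (fun θ => (hfc θ).deriv) a b

theorem cross3_eq_toLp_crossProduct (a b : E3) : cross3 a b = toLp 2 (ofLp a ⨯₃ ofLp b) := rfl

theorem real_inner_eq_dotProduct (a b : E3) : ⟪a, b⟫ = ofLp a ⬝ᵥ ofLp b := by
  simp [EuclideanSpace.inner_eq_star_dotProduct, dotProduct_comm]

theorem cross3_self (a : E3) : cross3 a a = 0 := by
  simp [cross3_eq_toLp_crossProduct]

theorem cross3_add_right (a b c : E3) : cross3 a (b + c) = cross3 a b + cross3 a c := by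
  simp [cross3_eq_toLp_crossProduct]

theorem cross3_sub_right (a b c : E3) : cross3 a (b - c) = cross3 a b - cross3 a c := by
  simp [cross3_eq_toLp_crossProduct]

theorem cross3_smul_right (s : ℝ) (a b : E3) : cross3 a (s • b) = s • cross3 a b := by
  simp [cross3_eq_toLp_crossProduct]

theorem cross3_smul_left (s : ℝ) (a b : E3) : cross3 (s • a) b = s • cross3 a b := by
  simp [cross3_eq_toLp_crossProduct]

theorem cross3_zero_right (a : E3) : cross3 a 0 = 0 := by
  simp [cross3_eq_toLp_crossProduct]

theorem inner_cross3_self_right (a b : E3) : ⟪b, cross3 a b⟫ = 0 := by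
  simp [real_inner_eq_dotProduct, cross3_eq_toLp_crossProduct, dot_cross_self]

theorem cross3_cross3_left (a b c : E3) : cross3 (cross3 a b) c = ⟪a, c⟫ • b - ⟪b, c⟫ • a := by
  simp [real_inner_eq_dotProduct, cross3_eq_toLp_crossProduct, cross_cross_eq_smul_sub_smul]

theorem cross3_cross3_right (a b c : E3) : cross3 a (cross3 b c) = ⟪a, c⟫ • b - ⟪a, b⟫ • c := by
  simp [real_inner_eq_dotProduct, cross3_eq_toLp_crossProduct, cross_cross_eq_smul_sub_smul',
    dotProduct_comm (ofLp b)]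

theorem norm_cross3_sq (a b : E3) : ‖cross3 a b‖ ^ 2 = ‖a‖ ^ 2 * ‖b‖ ^ 2 - ⟪a, b⟫ ^ 2 := by
  simp only [← real_inner_self_eq_norm_sq, real_inner_eq_dotProduct, cross3_eq_toLp_crossProduct,
    cross_dot_cross, dotProduct_comm (ofLp b) (ofLp a)]
  ring

theorem cross3_ne_zero_iff {a b : E3} : cross3 a b ≠ 0 ↔ LinearIndependent ℝ ![a, b] := by
  rw [cross3_eq_toLp_crossProduct, Ne, toLp_eq_zero, ← Ne,
    crossProduct_ne_zero_iff_linearIndependent,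
    ← (WithLp.linearEquiv 2 ℝ (Fin 3 → ℝ)).toLinearMap.linearIndependent_iff (LinearEquiv.ker _)]
  congr!
  ext i
  fin_cases i <;> rfl

theorem inner_self_cross3_smul_eq_of_inner_eq_zero {a b r : E3} (ha : ⟪a, r⟫ = 0)
    (hb : ⟪b, r⟫ = 0) : ⟪cross3 a b, cross3 a b⟫ • r = ⟪cross3 a b, r⟫ • cross3 a b := by
  have h0 : cross3 (cross3 a b) r = 0 := by
    rw [cross3_cross3_left, ha, hb, zero_smul, zero_smul, sub_zero]
  have h := cross3_cross3_right (cross3 a b) (cross3 a b) r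
  rwa [h0, cross3_zero_right, eq_comm, sub_eq_zero, eq_comm] at h

theorem exists_eq_smul_add_smul_cross3 {u p w : E3} (hu : u ≠ 0) (hp : ⟪p, u⟫ = 0) (hp0 : p ≠ 0)
    (hw : ⟪w, u⟫ = 0) : ∃ α β : ℝ, w = α • p + β • cross3 u p := by
  set q := cross3 u p
  set r := w - (⟪p, w⟫ / ‖p‖ ^ 2) • p
  have hq : ⟪q, q⟫ ≠ 0 := by
    rw [real_inner_self_eq_norm_sq, norm_cross3_sq, real_inner_comm, hp]
    simp [hu, hp0]
  have hur : ⟪u, r⟫ = 0 := by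
    rw [real_inner_comm] at hp hw
    simp [r, inner_sub_right, inner_smul_right, hp, hw]
  have hpr : ⟪p, r⟫ = 0 := by
    simp only [r, inner_sub_right, inner_smul_right, real_inner_self_eq_norm_sq]
    field_simp
    ring
  refine ⟨⟪p, w⟫ / ‖p‖ ^ 2, ⟪q, r⟫ / ⟪q, q⟫, ?_⟩
  have hr : ⟪q, q⟫ • r = ⟪q, r⟫ • q := inner_self_cross3_smul_eq_of_inner_eq_zero hur hpr
  rw [div_eq_inv_mul ⟪q, r⟫, mul_smul, ← hr, inv_smul_smul₀ hq, add_sub_cancel]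

theorem norm_eq_of_hasDerivAt_cross3 {u : E3} {c : ℝ → E3}
    (hc : ∀ θ, HasDerivAt c (cross3 u (c θ)) θ) (a b : ℝ) : ‖c a‖ = ‖c b‖ := by
  have hsq : ∀ θ, HasDerivAt (‖c ·‖ ^ 2) 0 θ := fun θ => by
    simpa [inner_cross3_self_right] using (hc θ).norm_sq
  have := is_const_of_deriv_eq_zero (fun θ => (hsq θ).differentiableAt) (fun θ => (hsq θ).deriv) a b
  exact (pow_left_inj₀ (norm_nonneg _) (norm_nonneg _) two_ne_zero).1 this

/-- Rodrigues' formula for the rotation by `θ` about the unit axis `u`. -/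
def rotAbout (u : E3) (θ : ℝ) (y : E3) : E3 :=
  ⟪y, u⟫ • u + cos θ • (y - ⟪y, u⟫ • u) + sin θ • cross3 u y

theorem rotAbout_zero (u y : E3) : rotAbout u 0 y = y := by
  simp [rotAbout]

theorem hasDerivAt_rotAbout {u : E3} (hu : ‖u‖ = 1) (y : E3) (θ : ℝ) :
    HasDerivAt (rotAbout u · y) (cross3 u (rotAbout u θ y)) θ := by
  have h := (((hasDerivAt_cos θ).smul_const (y - ⟪y, u⟫ • u)).const_add (⟪y, u⟫ • u)).add
    ((hasDerivAt_sin θ).smul_const (cross3 u y))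
  refine h.congr_deriv ?_
  have huu : ⟪u, u⟫ = 1 := by rw [real_inner_self_eq_norm_sq, hu, one_pow]
  simp only [rotAbout, cross3_add_right, cross3_sub_right, cross3_smul_right, cross3_self,
    cross3_cross3_right, huu, real_inner_comm u y]
  module

theorem norm_rotAbout {u : E3} (hu : ‖u‖ = 1) (θ : ℝ) (y : E3) : ‖rotAbout u θ y‖ = ‖y‖ := by
  simpa [rotAbout_zero] using norm_eq_of_hasDerivAt_cross3 (hasDerivAt_rotAbout hu y) θ 0

theorem norm_smul_add_smul_cross3_sq {u p : E3} (hu : ‖u‖ = 1) (hp : ⟪p, u⟫ = 0) (α β : ℝ) :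
    ‖α • p + β • cross3 u p‖ ^ 2 = (α ^ 2 + β ^ 2) * ‖p‖ ^ 2 := by
  have horth : ⟪α • p, β • cross3 u p⟫ = 0 := by
    simp [inner_smul_left, inner_smul_right, inner_cross3_self_right]
  have hq : ‖cross3 u p‖ ^ 2 = ‖p‖ ^ 2 := by
    rw [norm_cross3_sq, hu, real_inner_comm, hp]
    ring
  rw [sq, norm_add_sq_eq_norm_sq_add_norm_sq_real horth, ← sq, ← sq, norm_smul, norm_smul,
    mul_pow, mul_pow, hq, Real.norm_eq_abs, Real.norm_eq_abs, sq_abs, sq_abs]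
  ring

theorem exists_rotAbout_eq {u x z : E3} (hu : ‖u‖ = 1) (hxz : ‖x‖ = ‖z‖)
    (hxzu : ⟪x, u⟫ = ⟪z, u⟫) : ∃ θ, rotAbout u θ x = z := by
  have hwp : ‖z - ⟪x, u⟫ • u‖ ^ 2 = ‖x - ⟪x, u⟫ • u‖ ^ 2 := by
    rw [norm_sub_inner_smul_sq hu x, hxzu, norm_sub_inner_smul_sq hu z, hxz]
  set p := x - ⟪x, u⟫ • u with hp
  set w := z - ⟪x, u⟫ • u with hw
  have hpu : ⟪p, u⟫ = 0 := by simp [p, inner_sub_left, inner_smul_left, hu]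
  have hwu : ⟪w, u⟫ = 0 := by simp [w, hxzu, inner_sub_left, inner_smul_left, hu]
  rcases eq_or_ne p 0 with hp0 | hp0
  · have hw0 : w = 0 := by simpa [hp0] using hwp
    exact ⟨0, (rotAbout_zero u x).trans ((sub_eq_zero.1 hp0).trans (sub_eq_zero.1 hw0).symm)⟩
  obtain ⟨α, β, hαβw⟩ := exists_eq_smul_add_smul_cross3 (norm_ne_zero_iff.1 (hu ▸ one_ne_zero))
    hpu hp0 hwu
  have hαβ : α ^ 2 + β ^ 2 = 1 := by
    have h := norm_smul_add_smul_cross3_sq hu hpu α β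
    rw [← hαβw, hwp] at h
    have hp2 : ‖p‖ ^ 2 ≠ 0 := by positivity
    exact (mul_eq_right₀ hp2).1 h.symm
  obtain ⟨θ, hcos, hsin⟩ := exists_cos_eq_sin_eq hαβ
  have hux : cross3 u x = cross3 u p := by
    simp [p, cross3_sub_right, cross3_smul_right, cross3_self]
  refine ⟨θ, ?_⟩
  rw [rotAbout, ← hp, hux, hcos, hsin, add_assoc, ← hαβw, hw, add_sub_cancel]

/-- **Characteristic curves.** If the derivative of a `C¹` function `F` vanishes along
the tangential field `x ↦ (x·d)d̄ − (x·d̄)d` on the sphere, then `F` is constant on each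
circle of latitude relative to the axis `d × d̄`. -/
theorem constant_on_latitude_circles
    (d dbar : E3) (hind : LinearIndependent ℝ ![d, dbar])
    (F : E3 → ℝ) (hF : ContDiff ℝ 1 F)
    (hvanish : ∀ x ∈ sphS, ⟪gradient F x, ⟪x, d⟫ • dbar - ⟪x, dbar⟫ • d⟫ = 0) :
    ∀ x ∈ sphS, ∀ z ∈ sphS,
      ⟪x, cross3 d dbar⟫ = ⟪z, cross3 d dbar⟫ → F x = F z := by
  intro x hx z hz hlat
  set n := cross3 d dbar
  have hn : ‖n‖ ≠ 0 := norm_ne_zero_iff.2 (cross3_ne_zero_iff.2 hind)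
  set u := ‖n‖⁻¹ • n
  have hu : ‖u‖ = 1 := norm_smul_inv_norm (norm_ne_zero_iff.1 hn)
  rw [mem_sphS_iff] at hx hz
  obtain ⟨θ, rfl⟩ := exists_rotAbout_eq hu (hx.trans hz.symm) (by
    simp only [u, inner_smul_right, hlat])
  have hfield (y : E3) : ⟪y, d⟫ • dbar - ⟪y, dbar⟫ • d = ‖n‖ • cross3 u y := by
    rw [cross3_smul_left, smul_inv_smul₀ hn, cross3_cross3_left, real_inner_comm y,
      real_inner_comm y]
  calc F x = F (rotAbout u 0 x) := by rw [rotAbout_zero]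
    _ = F (rotAbout u θ x) := by
      refine apply_eq_apply_of_fderiv_apply_eq_zero (hF.differentiable one_ne_zero)
        (hasDerivAt_rotAbout hu x) (fun s => ?_) 0 θ
      have hs : rotAbout u s x ∈ sphS := by
        rw [mem_sphS_iff, norm_rotAbout hu, hx]
      have h := hvanish _ hs
      rwa [hfield, inner_smul_right, inner_gradient_left, mul_eq_zero, or_iff_right hn] at h
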